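/- Every circuit in P_10^k (k ≥ 1) is vertex-disjoint from at least one of the ten canonical disjoint copies of P^{k−1} contained in P_10^k. -/

import Mathlib

open SimpleGraph

/-- Degree of a vertex, via the cardinality of its neighbor set. -/
noncomputable def hdeg {V : Type*} (G : SimpleGraph V) (v : V) : ℕ :=
  {w | G.Adj v w}.ncard

/-- A cubic graph: every vertex has degree 3. -/
def IsCubic {V : Type*} (G : SimpleGraph V) : Prop := ∀ v, hdeg G v = 3

/-- A 2-connected graph: at least 3 vertices and deleting any vertex leaves it connected. -/
def TwoConnected {V : Type*} (G : SimpleGraph V) : Prop :=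
  3 ≤ Nat.card V ∧ ∀ v : V, (G.induce {v}ᶜ).Connected

/-- A 3-connected graph: at least 4 vertices and deleting any two vertices leaves it connected. -/
def ThreeConnected {V : Type*} (G : SimpleGraph V) : Prop :=
  4 ≤ Nat.card V ∧ ∀ v w : V, v ≠ w → (G.induce ({v, w} : Set V)ᶜ).Connected

/-- Edge list of the Petersen graph on `Fin 10` (vertex 9 has neighbors 4, 6, 7). -/
def petEdges : List (Fin 10 × Fin 10) :=
  [(0,1),(1,2),(2,3),(3,4),(4,0),(0,5),(1,6),(2,7),(3,8),(4,9),(5,7),(7,9),(9,6),(6,8),(8,5)]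

/-- The Petersen graph `P₁₀`. -/
def Pet : SimpleGraph (Fin 10) := SimpleGraph.fromRel (fun a b => (a, b) ∈ petEdges)

/-- Edge list of `P = P₁₀ - z` on `Fin 9` (where `z` was vertex 9);
its three 2-valent vertices are 4, 6, 7. -/
def pEdges : List (Fin 9 × Fin 9) :=
  [(0,1),(1,2),(2,3),(3,4),(4,0),(0,5),(1,6),(2,7),(3,8),(5,7),(6,8),(8,5)]

/-- The graph `P = P₁₀ - z`, the Petersen graph minus one vertex. -/
def Pgr : SimpleGraph (Fin 9) := SimpleGraph.fromRel (fun a b => (a, b) ∈ pEdges)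

/-- The three 2-valent vertices of `P` (as targets of the port assignment). -/
def portIdx : ℕ → Fin 9
  | 0 => 4
  | 1 => 6
  | _ => 7

/-- Port assignment: to which 2-valent vertex of the copy of `P` replacing `u` the
neighbor `v` of `u` gets attached (neighbors are ordered by the injective encoding `enc`). -/
noncomputable def port {V : Type*} (G : SimpleGraph V) (enc : V → ℕ) (u v : V) : Fin 9 :=
  portIdx (Nat.card {w : V | G.Adj u w ∧ enc w < enc v})

/-- Simultaneous `P`-inflation at every vertex of `G`. -/
noncomputable def inflate {V : Type*} (G : SimpleGraph V) (enc : V → ℕ) :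
    SimpleGraph (V × Fin 9) where
  Adj a b :=
    (a.1 = b.1 ∧ Pgr.Adj a.2 b.2) ∨
    (G.Adj a.1 b.1 ∧ a.2 = port G enc a.1 b.1 ∧ b.2 = port G enc b.1 a.1)
  symm := by
    constructor
    rintro a b (⟨h1, h2⟩ | ⟨h1, h2, h3⟩)
    · exact Or.inl ⟨h1.symm, h2.symm⟩
    · exact Or.inr ⟨h1.symm, h3, h2⟩
  loopless := by
    constructor
    rintro a (⟨-, h⟩ | ⟨h, -, -⟩)
    · exact Pgr.loopless.irrefl _ h
    · exact G.loopless.irrefl _ h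

/-- A graph bundled with an injective-style encoding of its vertices into `ℕ`. -/
structure GE where
  V : Type
  G : SimpleGraph V
  enc : V → ℕ

/-- One round of simultaneous `P`-inflation. -/
noncomputable def step (A : GE) : GE :=
  ⟨A.V × Fin 9, inflate A.G A.enc, fun p => Nat.pair (A.enc p.1) p.2.val⟩

/-- The iterated Petersen graph `P₁₀ᵏ`. -/
noncomputable def ItP10 : ℕ → GE
  | 0 => ⟨Fin 10, Pet, Fin.val⟩
  | k + 1 => step (ItP10 k)

/-- The iterated graph `Pᵏ` (starting from `P = P₁₀ - z`). -/
noncomputable def ItP : ℕ → GE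
  | 0 => ⟨Fin 9, Pgr, Fin.val⟩
  | k + 1 => step (ItP k)

/-- The canonical copy of `P^{k-1}` in `P₁₀ᵏ` containing a given vertex,
recorded by the corresponding vertex of `P₁₀`. -/
noncomputable def baseOf : (k : ℕ) → (ItP10 k).V → Fin 10
  | 0 => id
  | k + 1 => fun p => baseOf k p.1

/-- The parameter `l(G)`: minimum over circuits `C` of the maximum over vertices `v`
of the distance `d(C, v)`. -/
noncomputable def ell {V : Type*} (G : SimpleGraph V) : ℕ :=
  sInf { n | ∃ (v : V) (w : G.Walk v v), w.IsCycle ∧ ∀ u : V, ∃ x ∈ w.support, G.dist x u ≤ n }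

/-- `M` is a matching of `G`: a set of edges of `G`, pairwise not sharing a vertex. -/
def IsMatchingSet {V : Type*} (G : SimpleGraph V) (M : Set (Sym2 V)) : Prop :=
  M ⊆ G.edgeSet ∧ ∀ e ∈ M, ∀ f ∈ M, e ≠ f → ∀ v : V, ¬(v ∈ e ∧ v ∈ f)

/-- Every connected component of `H` has an even number of vertices. -/
def EvenComponents {V : Type*} (H : SimpleGraph V) : Prop :=
  ∀ c : H.ConnectedComponent, Even c.supp.ncard

/-- An `f`-matching: a matching `M` such that every component of `G - M` is
2-connected and has an even number of vertices. -/
def IsFMatching {V : Type*} (G : SimpleGraph V) (M : Set (Sym2 V)) : Prop :=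
  IsMatchingSet G M ∧
    ∀ c : (G.deleteEdges M).ConnectedComponent,
      TwoConnected ((G.deleteEdges M).induce c.supp) ∧ Even c.supp.ncard

/-- A minimal edge cut of `G`: deleting it disconnects `G`, but deleting any
proper subset does not. -/
def IsMinEdgeCut {V : Type*} (G : SimpleGraph V) (E : Set (Sym2 V)) : Prop :=
  E ⊆ G.edgeSet ∧ ¬(G.deleteEdges E).Connected ∧
    ∀ F : Set (Sym2 V), F ⊂ E → (G.deleteEdges F).Connected

/-- `H` is a subdivision of `F`: the vertices of `F` embed into `H` and each edge of `F`
corresponds to a path in `H`, the paths being internally disjoint and covering `H`. -/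
def IsSubdivisionOf {W U : Type*} (H : SimpleGraph W) (F : SimpleGraph U) : Prop :=
  ∃ f : U ↪ W, ∃ p : ∀ u v : U, F.Adj u v → H.Walk (f u) (f v),
    (∀ u v h, (p u v h).IsPath) ∧
    (∀ u v h, ∀ w ∈ (p u v h).support, w ∈ Set.range f → w = f u ∨ w = f v) ∧
    (∀ e : Sym2 W, e ∈ H.edgeSet ↔ ∃ u v h, e ∈ (p u v h).edges) ∧
    (∀ w : W, w ∈ Set.range f ∨ ∃ u v h, w ∈ (p u v h).support) ∧
    (∀ u v h u' v' h', ∀ w : W,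
      w ∈ (p u v h).support → w ∈ (p u' v' h').support →
      w ∈ Set.range f ∨ (u = u' ∧ v = v') ∨ (u = v' ∧ v = u'))

/-- Each component of `F` is an even circuit or a 2-connected cubic graph. -/
def GoodFrameComponents {U : Type*} (F : SimpleGraph U) : Prop :=
  ∀ c : F.ConnectedComponent,
    ((F.induce c.supp).Connected ∧ (∀ v, hdeg (F.induce c.supp) v = 2) ∧ Even c.supp.ncard) ∨
    (TwoConnected (F.induce c.supp) ∧ IsCubic (F.induce c.supp))

/-- `F` is a frame of `G`. -/
def IsFrame {U V : Type*} (F : SimpleGraph U) (G : SimpleGraph V) : Prop :=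
  GoodFrameComponents F ∧
    ∃ H : SimpleGraph V, H ≤ G ∧ IsSubdivisionOf H F ∧ EvenComponents H

/-- A proper 3-edge-coloring of `G`. -/
def ProperEdgeColoring {V : Type*} (G : SimpleGraph V) (f : Sym2 V → Fin 3) : Prop :=
  ∀ u v w : V, G.Adj u v → G.Adj u w → v ≠ w → f s(u, v) ≠ f s(u, w)

/-- The spanning subgraph of edges whose color is different from `c`
(i.e. the union of the other two color classes). -/
def twoClassSub {V : Type*} (G : SimpleGraph V) (f : Sym2 V → Fin 3) (c : Fin 3) :
    SimpleGraph V where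
  Adj u v := G.Adj u v ∧ f s(u, v) ≠ c
  symm := by
    constructor
    rintro u v ⟨h1, h2⟩
    exact ⟨h1.symm, by rwa [Sym2.eq_swap]⟩
  loopless := ⟨fun v h => G.loopless.irrefl v h.1⟩

/-- A Kotzig graph: a cubic graph with a proper 3-edge-coloring in which any two
color classes form a hamiltonian circuit. -/
def IsKotzig {V : Type*} (G : SimpleGraph V) : Prop :=
  IsCubic G ∧ ∃ f : Sym2 V → Fin 3, ProperEdgeColoring G f ∧
    ∀ c : Fin 3, (twoClassSub G f c).Connected ∧ ∀ v, hdeg (twoClassSub G f c) v = 2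

/-- The family `Fam` is an even subdivision-factor of `G`. -/
def IsEvenSubdivFactor {ι : Type*} (Fam : ι → Σ n : ℕ, SimpleGraph (Fin n))
    {V : Type*} (G : SimpleGraph V) : Prop :=
  ∃ H : SimpleGraph V, H ≤ G ∧ ∀ c : H.ConnectedComponent,
    Even c.supp.ncard ∧ ∃ i, IsSubdivisionOf (H.induce c.supp) (Fam i).2

/-!
Contracting each copy of `P^{k-1}` (a fibre of `baseOf k`) to a point maps a circuit of `P₁₀ᵏ`
to a closed walk in the Petersen graph. Only three edges leave a fibre, as `P₁₀` is cubic, while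
a circuit entering a fibre `c` times crosses its boundary `2c` times along distinct edges; so a
circuit enters every fibre at most once. A circuit meeting all ten fibres would thus contract to a
hamiltonian circuit of the Petersen graph, which has none (checked by exhaustive search).
-/

theorem List.Nodup.length_le_encard {α : Type*} {l : List α} {s : Set α} (hl : l.Nodup)
    (hs : ∀ x ∈ l, x ∈ s) : (l.length : ℕ∞) ≤ s.encard := by
  classical
  rw [← List.toFinset_card_of_nodup hl, ← Set.encard_coe_eq_coe_finsetCard]
  exact Set.encard_le_encard fun x hx => hs x (List.mem_toFinset.1 hx)

namespace SimpleGraph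

variable {V W : Type*} {G : SimpleGraph V} {H : SimpleGraph W}

def outArcs (G : SimpleGraph V) (s : Set V) : Set (V × V) :=
  {a | G.Adj a.1 a.2 ∧ a.1 ∈ s ∧ a.2 ∉ s}

theorem encard_outArcs_singleton_le (G : SimpleGraph V) (v : V) [Fintype (G.neighborSet v)] :
    (G.outArcs {v}).encard ≤ G.degree v := by
  rw [← card_neighborFinset_eq_degree, ← Set.encard_coe_eq_coe_finsetCard, coe_neighborFinset]
  refine Set.encard_le_encard_of_injOn (f := Prod.snd) (fun a ha => ?_)
    fun a ha b hb h => Prod.ext (ha.2.1.trans hb.2.1.symm) h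
  exact (ha.2.1 : a.1 = v) ▸ ha.1

namespace Walk

theorem IsTrail.countP_darts_crossing_le {u v : V} {w : G.Walk u v} (hw : w.IsTrail)
    (s : Set V) [DecidablePred (· ∈ s)] :
    (w.darts.countP (fun d => ¬(d.fst ∈ s ↔ d.snd ∈ s)) : ℕ∞) ≤ (G.outArcs s).encard := by
  set crossing := w.darts.filter fun d => ¬(d.fst ∈ s ↔ d.snd ∈ s)
  let orient (d : G.Dart) : V × V := if d.fst ∈ s then d.toProd else d.toProd.swap
  have hedges : crossing.map (fun d => s((orient d).1, (orient d).2)) = crossing.map Dart.edge := by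
    refine List.map_congr_left fun d _ => ?_
    by_cases h : d.fst ∈ s <;> simp [orient, h, Dart.edge, Sym2.eq_swap]
  have hnodup : (crossing.map orient).Nodup := by
    refine List.Nodup.of_map (fun a : V × V => s(a.1, a.2)) ?_
    rw [List.map_map, Function.comp_def, hedges]
    exact hw.edges_nodup.sublist ((List.filter_sublist).map _)
  rw [List.countP_eq_length_filter, ← List.length_map (f := orient)]
  refine hnodup.length_le_encard fun a ha => ?_
  obtain ⟨d, hd, rfl⟩ := List.mem_map.1 ha
  have hcross := (List.mem_filter.1 hd).2
  by_cases h : d.fst ∈ s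
  · simp_all [orient, outArcs, d.adj]
  · simp_all [orient, outArcs, d.adj.symm]

variable [DecidableEq W] (π : V → W) (hπ : ∀ ⦃a b⦄, G.Adj a b → π a ≠ π b → H.Adj (π a) (π b))

def contract : ∀ {u v : V}, G.Walk u v → H.Walk (π u) (π v)
  | _, _, nil => nil
  | u, _, cons (v := x) h p =>
    if hx : π u = π x then (p.contract).copy hx.symm rfl else cons (hπ h hx) p.contract

theorem mem_support_contract {u v x : V} (w : G.Walk u v) (hx : x ∈ w.support) :
    π x ∈ (w.contract π hπ).support := by
  induction w with
  | nil => simp_all [contract]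
  | @cons u y _ h p ih =>
    rw [support_cons, List.mem_cons] at hx
    rcases hx with rfl | hx
    · by_cases hu : π x = π y <;> simp [contract, hu]
    · by_cases hu : π u = π y <;> simp [contract, hu, ih hx]

theorem two_mul_count_support_contract {u v : V} (w : G.Walk u v) (i : W) :
    2 * (w.contract π hπ).support.count i =
      (if π u = i then 1 else 0) + (if π v = i then 1 else 0) +
        w.darts.countP (fun d => ¬(π d.fst = i ↔ π d.snd = i)) := by
  induction w with
  | nil =>
    simp only [contract, support_nil, List.count_singleton, darts_nil, List.countP_nil]
    split_ifs <;> simp_all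
  | @cons u y _ h p ih =>
    by_cases hu : π u = π y
    · simp [contract, hu, ih]
    · simp only [contract, hu, dite_false, support_cons, List.count_cons, darts_cons,
        List.countP_cons, beq_iff_eq, mul_add, ih]
      by_cases hui : π u = i <;> by_cases hyi : π y = i <;> simp_all <;> omega

theorem two_mul_count_tail_support_contract {v : V} (w : G.Walk v v) (i : W) :
    2 * (w.contract π hπ).support.tail.count i =
      w.darts.countP (fun d => ¬(π d.fst = i ↔ π d.snd = i)) := by
  have h := two_mul_count_support_contract π hπ w i
  rw [← cons_tail_support, List.count_cons] at h
  simp only [beq_iff_eq] at h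
  split_ifs at h <;> omega

theorem IsTrail.isHamiltonianCycle_contract [Fintype W] (hW : 3 ≤ Fintype.card W) {v : V}
    {w : G.Walk v v} (hw : w.IsTrail)
    (hcut : ∀ i, (G.outArcs {x | π x = i}).encard ≤ 3)
    (hmeet : ∀ i, ∃ x ∈ w.support, π x = i) :
    (w.contract π hπ).IsHamiltonianCycle := by
  set q := w.contract π hπ
  have hcount (i : W) : q.support.tail.count i ≤ 1 := by
    have h := (hw.countP_darts_crossing_le {x | π x = i}).trans (hcut i)
    have h' : 2 * q.support.tail.count i ≤ 3 := by
      rw [two_mul_count_tail_support_contract]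
      exact_mod_cast h
    omega
  have hmem (i : W) : i ∈ q.support := by
    obtain ⟨x, hx, rfl⟩ := hmeet i
    exact mem_support_contract π hπ w hx
  have hnil : ¬q.Nil := by
    have : Nontrivial W := Fintype.one_lt_card_iff_nontrivial.1 (by omega)
    obtain ⟨i, hi⟩ := exists_ne (π v)
    intro h
    simpa [h.eq_nil, hi] using hmem i
  have htail : q.tail.IsHamiltonian := by
    intro i
    rw [support_tail_of_not_nil _ hnil]
    refine le_antisymm (hcount i) (List.count_pos_iff.2 ?_)
    rcases List.mem_cons.1 (cons_tail_support q ▸ hmem i) with rfl | h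
    · exact end_mem_tail_support hnil
    · exact h
  refine ⟨isCycle_iff_isPath_tail_and_le_length.2 ⟨htail.isPath, ?_⟩, htail⟩
  rw [← length_tail_add_one hnil, htail.length_eq]
  omega

end Walk

def pathSearch {n : ℕ} (G : SimpleGraph (Fin n)) [DecidableRel G.Adj] (t : Fin n) :
    ℕ → Fin n → List (Fin n) → Bool
  | 0, cur, _ => cur = t
  | m + 1, cur, seen =>
    (List.finRange n).any fun b => G.Adj cur b ∧ b ∉ seen ∧ pathSearch G t m b (b :: seen)

theorem pathSearch_of_isChain {n : ℕ} (G : SimpleGraph (Fin n)) [DecidableRel G.Adj]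
    (t : Fin n) : ∀ (l : List (Fin n)) (cur : Fin n) (seen : List (Fin n)),
    (cur :: l).IsChain G.Adj → l.Nodup → (∀ b ∈ l, b ∉ seen) →
    (cur :: l).getLast (List.cons_ne_nil _ _) = t → pathSearch G t l.length cur seen = true
  | [], cur, seen, _, _, _, hlast => by simpa [pathSearch] using hlast
  | b :: l, cur, seen, hchain, hnodup, hseen, hlast => by
    rw [List.isChain_cons_cons] at hchain
    rw [List.nodup_cons] at hnodup
    simp only [List.length_cons, pathSearch, List.any_eq_true, List.mem_finRange, true_and,
      decide_eq_true_eq]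
    refine ⟨b, hchain.1, hseen b List.mem_cons_self,
      pathSearch_of_isChain G t l b (b :: seen) hchain.2 hnodup.2 (fun c hc => ?_) ?_⟩
    · simp only [List.mem_cons, not_or]
      exact ⟨fun h => hnodup.1 (h ▸ hc), hseen c (List.mem_cons_of_mem b hc)⟩
    · rwa [List.getLast_cons] at hlast

end SimpleGraph

instance : DecidableRel Pet.Adj := fun _ _ => decidable_of_iff _ (fromRel_adj _ _ _).symm

theorem pet_isRegularOfDegree : Pet.IsRegularOfDegree 3 := by
  unfold IsRegularOfDegree; decide

theorem pet_not_isHamiltonian : ¬Pet.IsHamiltonian := by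
  intro h
  obtain ⟨q, hq⟩ := h.exists_isHamiltonianCycle 0
  have hnil := hq.isCycle.not_nil
  have hsearch := pathSearch_of_isChain Pet 0 q.support.tail 0 []
    (by rw [Walk.cons_tail_support]; exact q.isChain_adj_support)
    (Walk.support_tail_of_not_nil _ hnil ▸ hq.isHamiltonian_tail.isPath.support_nodup)
    (by simp) (by simp [Walk.cons_tail_support])
  rw [List.length_tail, Walk.length_support, hq.length_eq] at hsearch
  exact absurd hsearch (by decide)

theorem inflate_adj_of_fst_ne {V : Type*} {G : SimpleGraph V} {enc : V → ℕ} {a b : V × Fin 9}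
    (h : (inflate G enc).Adj a b) (hne : a.1 ≠ b.1) :
    G.Adj a.1 b.1 ∧ a.2 = port G enc a.1 b.1 ∧ b.2 = port G enc b.1 a.1 :=
  h.resolve_left fun h' => hne h'.1

theorem encard_outArcs_inflate_le {V : Type*} (G : SimpleGraph V) (enc : V → ℕ) (s : Set V) :
    ((inflate G enc).outArcs (Prod.fst ⁻¹' s)).encard ≤ (G.outArcs s).encard := by
  have hne {a : (V × Fin 9) × (V × Fin 9)}
      (ha : a ∈ (inflate G enc).outArcs (Prod.fst ⁻¹' s)) : a.1.1 ≠ a.2.1 := fun h => ha.2.2 (show a.2.1 ∈ s from h ▸ ha.2.1)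
  refine Set.encard_le_encard_of_injOn (f := fun a => (a.1.1, a.2.1))
    (fun a ha => ⟨(inflate_adj_of_fst_ne ha.1 (hne ha)).1, ha.2⟩) ?_
  rintro ⟨a, b⟩ hab ⟨a', b'⟩ hab' h
  obtain ⟨-, ha, hb⟩ := inflate_adj_of_fst_ne hab.1 (hne hab)
  obtain ⟨-, ha', hb'⟩ := inflate_adj_of_fst_ne hab'.1 (hne hab')
  simp only [Prod.mk.injEq] at h ⊢
  obtain ⟨h1, h2⟩ := h
  exact ⟨Prod.ext h1 (by rw [ha, ha', h1, h2]), Prod.ext h2 (by rw [hb, hb', h1, h2])⟩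

theorem baseOf_adj : ∀ (k : ℕ) ⦃a b : (ItP10 k).V⦄, (ItP10 k).G.Adj a b →
    baseOf k a ≠ baseOf k b → Pet.Adj (baseOf k a) (baseOf k b)
  | 0, _, _, h, _ => h
  | k + 1, _, _, h, hne =>
    baseOf_adj k (inflate_adj_of_fst_ne h fun h' => hne (congrArg (baseOf k) h')).1 hne

theorem encard_outArcs_baseOf_le (k : ℕ) (i : Fin 10) :
    ((ItP10 k).G.outArcs {x | baseOf k x = i}).encard ≤ 3 := by
  induction k with
  | zero => exact (encard_outArcs_singleton_le Pet i).trans (by simp [pet_isRegularOfDegree i])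
  | succ k ih => exact (encard_outArcs_inflate_le _ _ _).trans ih

theorem stmt_8_general (k : ℕ) (v : (ItP10 k).V) (w : (ItP10 k).G.Walk v v)
    (hw : w.IsCycle) : ∃ i : Fin 10, ∀ x ∈ w.support, baseOf k x ≠ i := by
  by_contra! hmeet
  exact pet_not_isHamiltonian fun _ => ⟨_, _, hw.isTrail.isHamiltonianCycle_contract _
    (baseOf_adj k) (by simp) (encard_outArcs_baseOf_le k) hmeet⟩

/-- every circuit of `P₁₀ᵏ` (`k ≥ 1`) is vertex-disjoint from at least
one of the ten canonical copies of `P^{k-1}` (the copies being the fibers of `baseOf`). -/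
theorem stmt_8 (k : ℕ) (hk : 1 ≤ k) (v : (ItP10 k).V) (w : (ItP10 k).G.Walk v v)
    (hw : w.IsCycle) : ∃ i : Fin 10, ∀ x ∈ w.support, baseOf k x ≠ i :=
  stmt_8_general k v w hw
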